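/- Let G be a finite graph whose half-edges are labeled with labels in {L, R, U, D} satisfying: (1) distinct edges incident to a node get distinct labels; (2) if a half-edge of edge {u,v} at u is labeled L then the half-edge at v is labeled R, and vice versa; (3) same for U and D; (4) if u has incident edges labeled R and U, then following R, U, L, D from u returns to u; (5) if u has an R-neighbor then u has a D-incident (resp. U-incident) edge iff its R-neighbor does; (6) if u has a U-neighbor then u has an L-incident (resp. R-incident) edge iff its U-neighbor does. Suppose additionally that G is connected, some node has no incident half-edge labeled D, and some node has no incident half-edge labeled L. Then G is isomorphic to an h×w grid: there is an assignment of coordinates (x_u, y_u) with 0 ≤ x_u < w, 0 ≤ y_u < h such that u ~ v iff (x_u = x_v and |y_u − y_v| = 1) or (y_u = y_v and |x_u − x_v| = 1), and moreover the L/R labels point along decreasing/increasing x and D/U along decreasing/increasing y. -/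
import Mathlib


/-- The four half-edge labels of the grid constraint system. -/
inductive GDir | L | R | U | D
deriving DecidableEq

namespace Stmt7Aux

def GDir.t : GDir → GDir
  | GDir.L => GDir.D
  | GDir.D => GDir.L
  | GDir.R => GDir.U
  | GDir.U => GDir.R

variable {V : Type*}

lemma chain_lift (A : V → V → Prop) (Rr : V → V → Prop)
    (sq : ∀ u v d, Rr u v → A u d → ∃ d', A v d' ∧ Rr d d')
    (f : ℕ → V) (hf : ∀ n, A (f n) (f (n + 1))) (v : V) (h0 : Rr (f 0) v) :
    ∃ g : ℕ → V, g 0 = v ∧ ∀ n, A (g n) (g (n + 1)) := by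
  choose d hd1 hd2 using sq
  let g : (n : ℕ) → {q : V // Rr (f n) q} := fun n =>
    Nat.rec ⟨v, h0⟩ (fun n p => ⟨d (f n) p.1 (f (n + 1)) p.2 (hf n),
      hd2 (f n) p.1 (f (n + 1)) p.2 (hf n)⟩) n
  exact ⟨fun n => (g n).1, rfl, fun n => hd1 (f n) (g n).1 (f (n + 1)) (g n).2 (hf n)⟩

lemma uniq_lab (G : SimpleGraph V) (lab : V → V → GDir)
    (h1 : ∀ u v w : V, G.Adj u v → G.Adj u w → v ≠ w → lab u v ≠ lab u w) :
    ∀ u a b, G.Adj u a → G.Adj u b → lab u a = lab u b → a = b := by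
  intro u a b ha hb he
  by_contra hne
  exact h1 u a b ha hb hne he

lemma square (G : SimpleGraph V) (lab : V → V → GDir)
    (h1 : ∀ u v w : V, G.Adj u v → G.Adj u w → v ≠ w → lab u v ≠ lab u w)
    (h2 : ∀ u v : V, G.Adj u v → (lab u v = GDir.L ↔ lab v u = GDir.R))
    (h3 : ∀ u v : V, G.Adj u v → (lab u v = GDir.U ↔ lab v u = GDir.D))
    (h4 : ∀ u a b : V, G.Adj u a → lab u a = GDir.R → G.Adj u b → lab u b = GDir.U →
      ∃ c d : V, G.Adj a c ∧ lab a c = GDir.U ∧ G.Adj c d ∧ lab c d = GDir.L ∧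
        G.Adj d u ∧ lab d u = GDir.D)
    (h6 : ∀ u v : V, G.Adj u v → lab u v = GDir.U →
      ((∃ d, G.Adj u d ∧ lab u d = GDir.L) ↔ (∃ d, G.Adj v d ∧ lab v d = GDir.L)) ∧
      ((∃ d, G.Adj u d ∧ lab u d = GDir.R) ↔ (∃ d, G.Adj v d ∧ lab v d = GDir.R))) :
    ∀ u v d, G.Adj u v → lab u v = GDir.R → G.Adj u d → lab u d = GDir.D →
      ∃ d', G.Adj v d' ∧ lab v d' = GDir.D ∧ G.Adj d d' ∧ lab d d' = GDir.R := by
  intro u v d huv hR hud hD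
  have uq := uniq_lab G lab h1
  have hdu : lab d u = GDir.U := (h3 d u hud.symm).mpr hD
  obtain ⟨r, hdr, hrR⟩ := (h6 d u hud.symm hdu).2.mpr ⟨v, huv, hR⟩
  obtain ⟨c, d2, hrc, hrcU, hcd2, hcd2L, hd2d, hd2dD⟩ := h4 d r u hdr hrR hud.symm hdu
  have hdd2U : lab d d2 = GDir.U := (h3 d d2 hd2d.symm).mpr hd2dD
  have hud2 : u = d2 := uq d u d2 hud.symm hd2d.symm (hdu.trans hdd2U.symm)
  subst hud2
  have hucR : lab u c = GDir.R := (h2 c u hcd2).mp hcd2L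
  have hvc : v = c := uq u v c huv hcd2.symm (hR.trans hucR.symm)
  subst hvc
  have hvrD : lab v r = GDir.D := (h3 r v hrc).mp hrcU
  exact ⟨r, hrc.symm, hvrD, hdr, hrR⟩

lemma exists_height [Fintype V] (G : SimpleGraph V) (lab : V → V → GDir)
    (h1 : ∀ u v w : V, G.Adj u v → G.Adj u w → v ≠ w → lab u v ≠ lab u w)
    (h2 : ∀ u v : V, G.Adj u v → (lab u v = GDir.L ↔ lab v u = GDir.R))
    (h3 : ∀ u v : V, G.Adj u v → (lab u v = GDir.U ↔ lab v u = GDir.D))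
    (h4 : ∀ u a b : V, G.Adj u a → lab u a = GDir.R → G.Adj u b → lab u b = GDir.U →
      ∃ c d : V, G.Adj a c ∧ lab a c = GDir.U ∧ G.Adj c d ∧ lab c d = GDir.L ∧
        G.Adj d u ∧ lab d u = GDir.D)
    (h5 : ∀ u v : V, G.Adj u v → lab u v = GDir.R →
      ((∃ d, G.Adj u d ∧ lab u d = GDir.D) ↔ (∃ d, G.Adj v d ∧ lab v d = GDir.D)) ∧
      ((∃ d, G.Adj u d ∧ lab u d = GDir.U) ↔ (∃ d, G.Adj v d ∧ lab v d = GDir.U)))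
    (h6 : ∀ u v : V, G.Adj u v → lab u v = GDir.U →
      ((∃ d, G.Adj u d ∧ lab u d = GDir.L) ↔ (∃ d, G.Adj v d ∧ lab v d = GDir.L)) ∧
      ((∃ d, G.Adj u d ∧ lab u d = GDir.R) ↔ (∃ d, G.Adj v d ∧ lab v d = GDir.R)))
    (hconn : G.Connected)
    (hnoD : ∃ u : V, ∀ v, G.Adj u v → lab u v ≠ GDir.D) :
    ∃ y : V → ℕ,
      (∀ u v, G.Adj u v → lab u v = GDir.D → y u = y v + 1) ∧
      (∀ u, y u = 0 ↔ ¬∃ v, G.Adj u v ∧ lab u v = GDir.D) ∧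
      (∀ u v, G.Adj u v → lab u v = GDir.R → y u = y v) := by
  classical
  have uq := uniq_lab G lab h1
  have sq := square G lab h1 h2 h3 h4 h6
  have prop : ∀ u v, G.Adj u v →
      (∃ f : ℕ → V, f 0 = u ∧ ∀ n, G.Adj (f n) (f (n+1)) ∧ lab (f n) (f (n+1)) = GDir.D) →
      (∃ f : ℕ → V, f 0 = v ∧ ∀ n, G.Adj (f n) (f (n+1)) ∧ lab (f n) (f (n+1)) = GDir.D) := by
    rintro u v huv ⟨f, hf0, hf⟩
    cases hc : lab u v with
    | D =>
      have h01 := hf 0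
      rw [hf0] at h01
      have hv : v = f 1 := uq u v (f 1) huv h01.1 (hc.trans h01.2.symm)
      exact ⟨fun n => f (n+1), hv.symm, fun n => hf (n+1)⟩
    | U =>
      refine ⟨fun n => Nat.casesOn n v f, rfl, fun n => ?_⟩
      cases n with
      | zero =>
        show G.Adj v (f 0) ∧ lab v (f 0) = GDir.D
        rw [hf0]
        exact ⟨huv.symm, (h3 u v huv).mp hc⟩
      | succ m => exact hf m
    | R =>
      exact chain_lift (fun a b => G.Adj a b ∧ lab a b = GDir.D)
        (fun a b => G.Adj a b ∧ lab a b = GDir.R)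
        (fun a b c hab hac => by
          obtain ⟨d', h₁, h₂, h₃, h₄⟩ := sq a b c hab.1 hab.2 hac.1 hac.2
          exact ⟨d', ⟨h₁, h₂⟩, h₃, h₄⟩)
        f hf v (by rw [hf0]; exact ⟨huv, hc⟩)
    | L =>
      have sqL : ∀ a b c, (G.Adj a b ∧ lab a b = GDir.L) → (G.Adj a c ∧ lab a c = GDir.D) →
          ∃ c', (G.Adj b c' ∧ lab b c' = GDir.D) ∧ (G.Adj c c' ∧ lab c c' = GDir.L) := by
        rintro a b c ⟨hab, habL⟩ ⟨hac, hacD⟩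
        have hbaR : lab b a = GDir.R := (h2 a b hab).mp habL
        obtain ⟨e, hbe, hbeD⟩ := (h5 b a hab.symm hbaR).1.mpr ⟨c, hac, hacD⟩
        obtain ⟨e', he₁, he₂, he₃, he₄⟩ := sq b a e hab.symm hbaR hbe hbeD
        have hec : e' = c := uq a e' c he₁ hac (he₂.trans hacD.symm)
        rw [hec] at he₃ he₄
        exact ⟨e, ⟨hbe, hbeD⟩, he₃.symm, (h2 c e he₃.symm).mpr he₄⟩
      exact chain_lift _ _ sqL f hf v (by rw [hf0]; exact ⟨huv, hc⟩)
  obtain ⟨u0, hu0⟩ := hnoD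
  have noP : ∀ u, ¬∃ f : ℕ → V, f 0 = u ∧
      ∀ n, G.Adj (f n) (f (n+1)) ∧ lab (f n) (f (n+1)) = GDir.D := by
    intro u hPu
    have key : ∀ {a b : V}, G.Walk a b →
        (∃ f : ℕ → V, f 0 = a ∧ ∀ n, G.Adj (f n) (f (n+1)) ∧ lab (f n) (f (n+1)) = GDir.D) →
        (∃ f : ℕ → V, f 0 = b ∧ ∀ n, G.Adj (f n) (f (n+1)) ∧ lab (f n) (f (n+1)) = GDir.D) := by
      intro a b p
      induction p with
      | nil => exact id
      | cons h _ ih => exact fun hp => ih (prop _ _ h hp)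
    have hP0 := (hconn.preconnected u u0).elim (fun p => key p hPu)
    obtain ⟨f, hf0, hf⟩ := hP0
    have h01 := hf 0
    rw [hf0] at h01
    exact hu0 (f 1) h01.1 h01.2
  have exD : ∀ u : V, ∃ v, (∃ w, G.Adj u w ∧ lab u w = GDir.D) →
      G.Adj u v ∧ lab u v = GDir.D := by
    intro u
    by_cases h : ∃ w, G.Adj u w ∧ lab u w = GDir.D
    · exact ⟨h.choose, fun _ => h.choose_spec⟩
    · exact ⟨u, fun hh => absurd hh h⟩
  choose dn hdn using exD
  have term : ∀ u : V, ∃ n, ¬∃ w, G.Adj (dn^[n] u) w ∧ lab (dn^[n] u) w = GDir.D := by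
    intro u
    by_contra hc
    push_neg at hc

    exact noP u ⟨fun n => dn^[n] u, rfl, fun n => by
      show G.Adj (dn^[n] u) (dn^[n+1] u) ∧ lab (dn^[n] u) (dn^[n+1] u) = GDir.D
      rw [Function.iterate_succ_apply']
      exact hdn _ (hc n)⟩
  set y : V → ℕ := fun u => Nat.find (term u) with hy
  have yzero : ∀ u, y u = 0 ↔ ¬∃ w, G.Adj u w ∧ lab u w = GDir.D := by
    intro u
    show Nat.find (term u) = 0 ↔ _
    rw [Nat.find_eq_zero]
    simp
  have ystep : ∀ u v, G.Adj u v → lab u v = GDir.D → y u = y v + 1 := by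
    intro u v huv hl
    have hD : ∃ w, G.Adj u w ∧ lab u w = GDir.D := ⟨v, huv, hl⟩
    have hv : dn u = v := uq u (dn u) v (hdn u hD).1 huv ((hdn u hD).2.trans hl.symm)
    have hne : y u ≠ 0 := fun h => (yzero u).mp h hD
    have hle : y u ≤ y v + 1 := by
      apply Nat.find_min'
      rw [Function.iterate_succ_apply, hv]
      exact Nat.find_spec (term v)
    have hge : y v ≤ y u - 1 := by
      apply Nat.find_min'
      have hs := Nat.find_spec (term u)
      have hh : Nat.find (term u) = (y u - 1) + 1 := by
        show y u = (y u - 1) + 1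
        omega
      rw [hh, Function.iterate_succ_apply, hv] at hs
      exact hs
    omega
  have ycR : ∀ n u v, y u = n → G.Adj u v → lab u v = GDir.R → y u = y v := by
    intro n
    induction n using Nat.strong_induction_on with
    | _ n ih =>
      intro u v hyu huv hl
      by_cases h0 : ∃ w, G.Adj u w ∧ lab u w = GDir.D
      · obtain ⟨hadj, hlabD⟩ := hdn u h0
        obtain ⟨d', hvd', hd'D, hdd', hdd'R⟩ := sq u v (dn u) huv hl hadj hlabD
        have e1 : y u = y (dn u) + 1 := ystep u (dn u) hadj hlabD
        have e2 : y v = y d' + 1 := ystep v d' hvd' hd'D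
        have e3 : y (dn u) = y d' := ih (y (dn u)) (by omega) (dn u) d' rfl hdd' hdd'R
        omega
      · have hv0 : ¬∃ w, G.Adj v w ∧ lab v w = GDir.D :=
          fun hw => h0 ((h5 u v huv hl).1.mpr hw)
        rw [(yzero u).mpr h0, (yzero v).mpr hv0]
  exact ⟨y, ystep, yzero, fun u v h hl => ycR (y u) u v rfl h hl⟩

end Stmt7Aux

/-- A connected finite graph whose half-edges are labeled with
`{L,R,U,D}` satisfying the six grid constraints, and which has a node with no
`D`-labeled half-edge and a node with no `L`-labeled half-edge, is isomorphic to
an `h×w` grid, with the labels pointing in the corresponding directions. -/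
theorem stmt7 {V : Type*} [Fintype V] (G : SimpleGraph V) (lab : V → V → GDir)
    -- (1) distinct incident edges get distinct labels
    (h1 : ∀ u v w : V, G.Adj u v → G.Adj u w → v ≠ w → lab u v ≠ lab u w)
    -- (2) L/R matching across each edge
    (h2 : ∀ u v : V, G.Adj u v → (lab u v = GDir.L ↔ lab v u = GDir.R))
    -- (3) U/D matching across each edge
    (h3 : ∀ u v : V, G.Adj u v → (lab u v = GDir.U ↔ lab v u = GDir.D))
    -- (4) square closure: following R, U, L, D returns to the start
    (h4 : ∀ u a b : V, G.Adj u a → lab u a = GDir.R → G.Adj u b → lab u b = GDir.U →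
      ∃ c d : V, G.Adj a c ∧ lab a c = GDir.U ∧ G.Adj c d ∧ lab c d = GDir.L ∧
        G.Adj d u ∧ lab d u = GDir.D)
    -- (5) D- and U-edges propagate along R-edges
    (h5 : ∀ u v : V, G.Adj u v → lab u v = GDir.R →
      ((∃ d, G.Adj u d ∧ lab u d = GDir.D) ↔ (∃ d, G.Adj v d ∧ lab v d = GDir.D)) ∧
      ((∃ d, G.Adj u d ∧ lab u d = GDir.U) ↔ (∃ d, G.Adj v d ∧ lab v d = GDir.U)))
    -- (6) L- and R-edges propagate along U-edges
    (h6 : ∀ u v : V, G.Adj u v → lab u v = GDir.U →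
      ((∃ d, G.Adj u d ∧ lab u d = GDir.L) ↔ (∃ d, G.Adj v d ∧ lab v d = GDir.L)) ∧
      ((∃ d, G.Adj u d ∧ lab u d = GDir.R) ↔ (∃ d, G.Adj v d ∧ lab v d = GDir.R)))
    (hconn : G.Connected)
    (hnoD : ∃ u : V, ∀ v, G.Adj u v → lab u v ≠ GDir.D)
    (hnoL : ∃ u : V, ∀ v, G.Adj u v → lab u v ≠ GDir.L) :
    ∃ (h w : ℕ) (x y : V → ℕ),
      (∀ u, x u < w ∧ y u < h) ∧
      (∀ u v, x u = x v → y u = y v → u = v) ∧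
      (∀ a b, a < w → b < h → ∃ u, x u = a ∧ y u = b) ∧
      (∀ u v, G.Adj u v ↔
        ((x u = x v ∧ (y u + 1 = y v ∨ y v + 1 = y u)) ∨
         (y u = y v ∧ (x u + 1 = x v ∨ x v + 1 = x u)))) ∧
      (∀ u v, G.Adj u v →
        (lab u v = GDir.R ↔ x v = x u + 1) ∧ (lab u v = GDir.L ↔ x u = x v + 1) ∧
        (lab u v = GDir.U ↔ y v = y u + 1) ∧ (lab u v = GDir.D ↔ y u = y v + 1)) := by
  classical
  have uq := Stmt7Aux.uniq_lab G lab h1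
  have sq := Stmt7Aux.square G lab h1 h2 h3 h4 h6
  obtain ⟨y, ya, y0, ycR⟩ := Stmt7Aux.exists_height G lab h1 h2 h3 h4 h5 h6 hconn hnoD
  -- the transposed labeling
  have tiD : ∀ a : GDir, Stmt7Aux.GDir.t a = GDir.D ↔ a = GDir.L := by
    intro a; cases a <;> simp [Stmt7Aux.GDir.t]
  have tiU : ∀ a : GDir, Stmt7Aux.GDir.t a = GDir.U ↔ a = GDir.R := by
    intro a; cases a <;> simp [Stmt7Aux.GDir.t]
  have tiR : ∀ a : GDir, Stmt7Aux.GDir.t a = GDir.R ↔ a = GDir.U := by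
    intro a; cases a <;> simp [Stmt7Aux.GDir.t]
  have tiL : ∀ a : GDir, Stmt7Aux.GDir.t a = GDir.L ↔ a = GDir.D := by
    intro a; cases a <;> simp [Stmt7Aux.GDir.t]
  have tinj : ∀ a b : GDir, Stmt7Aux.GDir.t a = Stmt7Aux.GDir.t b → a = b := by
    intro a b; cases a <;> cases b <;> simp [Stmt7Aux.GDir.t]
  have h1' : ∀ u v w : V, G.Adj u v → G.Adj u w → v ≠ w →
      Stmt7Aux.GDir.t (lab u v) ≠ Stmt7Aux.GDir.t (lab u w) :=
    fun u v w hv hw hne he => h1 u v w hv hw hne (tinj _ _ he)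
  have h2' : ∀ u v : V, G.Adj u v →
      (Stmt7Aux.GDir.t (lab u v) = GDir.L ↔ Stmt7Aux.GDir.t (lab v u) = GDir.R) := by
    intro u v huv
    rw [tiL, tiR]
    exact (h3 v u huv.symm).symm
  have h3' : ∀ u v : V, G.Adj u v →
      (Stmt7Aux.GDir.t (lab u v) = GDir.U ↔ Stmt7Aux.GDir.t (lab v u) = GDir.D) := by
    intro u v huv
    rw [tiU, tiD]
    exact (h2 v u huv.symm).symm
  have h4' : ∀ u a b : V, G.Adj u a → Stmt7Aux.GDir.t (lab u a) = GDir.R → G.Adj u b →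
      Stmt7Aux.GDir.t (lab u b) = GDir.U →
      ∃ c d : V, G.Adj a c ∧ Stmt7Aux.GDir.t (lab a c) = GDir.U ∧ G.Adj c d ∧
        Stmt7Aux.GDir.t (lab c d) = GDir.L ∧ G.Adj d u ∧ Stmt7Aux.GDir.t (lab d u) = GDir.D := by
    intro u a b hua hUa hub hRb
    rw [tiR] at hUa
    rw [tiU] at hRb
    obtain ⟨c, d, hbc, hbcU, hcd, hcdL, hdu, hduD⟩ := h4 u b a hub hRb hua hUa
    have hudU : lab u d = GDir.U := (h3 u d hdu.symm).mpr hduD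
    have had : a = d := uq u a d hua hdu.symm (hUa.trans hudU.symm)
    subst had
    refine ⟨c, b, hcd.symm, ?_, hbc.symm, ?_, hub.symm, ?_⟩
    · rw [tiU]; exact (h2 c a hcd).mp hcdL
    · rw [tiL]; exact (h3 b c hbc).mp hbcU
    · rw [tiD]; exact (h2 b u hub.symm).mpr hRb
  have h5' : ∀ u v : V, G.Adj u v → Stmt7Aux.GDir.t (lab u v) = GDir.R →
      ((∃ d, G.Adj u d ∧ Stmt7Aux.GDir.t (lab u d) = GDir.D) ↔
        (∃ d, G.Adj v d ∧ Stmt7Aux.GDir.t (lab v d) = GDir.D)) ∧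
      ((∃ d, G.Adj u d ∧ Stmt7Aux.GDir.t (lab u d) = GDir.U) ↔
        (∃ d, G.Adj v d ∧ Stmt7Aux.GDir.t (lab v d) = GDir.U)) := by
    intro u v huv ht
    rw [tiR] at ht
    simp only [tiD, tiU]
    exact h6 u v huv ht
  have h6' : ∀ u v : V, G.Adj u v → Stmt7Aux.GDir.t (lab u v) = GDir.U →
      ((∃ d, G.Adj u d ∧ Stmt7Aux.GDir.t (lab u d) = GDir.L) ↔
        (∃ d, G.Adj v d ∧ Stmt7Aux.GDir.t (lab v d) = GDir.L)) ∧
      ((∃ d, G.Adj u d ∧ Stmt7Aux.GDir.t (lab u d) = GDir.R) ↔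
        (∃ d, G.Adj v d ∧ Stmt7Aux.GDir.t (lab v d) = GDir.R)) := by
    intro u v huv ht
    rw [tiU] at ht
    simp only [tiL, tiR]
    exact h5 u v huv ht
  have hnoL' : ∃ u : V, ∀ v, G.Adj u v → Stmt7Aux.GDir.t (lab u v) ≠ GDir.D := by
    obtain ⟨u1, hu1⟩ := hnoL
    exact ⟨u1, fun v hv hD => hu1 v hv ((tiD _).mp hD)⟩
  obtain ⟨x, xa0, x00, xcR0⟩ := Stmt7Aux.exists_height G
    (fun u v => Stmt7Aux.GDir.t (lab u v)) h1' h2' h3' h4' h5' h6' hconn hnoL'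
  simp only [tiD, tiR] at xa0 x00 xcR0
  have xa : ∀ u v, G.Adj u v → lab u v = GDir.L → x u = x v + 1 := xa0
  have x0 : ∀ u, x u = 0 ↔ ¬∃ v, G.Adj u v ∧ lab u v = GDir.L := x00
  have xcU : ∀ u v, G.Adj u v → lab u v = GDir.U → x u = x v := xcR0
  -- derived step lemmas
  have yb : ∀ u v, G.Adj u v → lab u v = GDir.U → y v = y u + 1 :=
    fun u v h hl => ya v u h.symm ((h3 u v h).mp hl)
  have ycL : ∀ u v, G.Adj u v → lab u v = GDir.L → y u = y v :=
    fun u v h hl => (ycR v u h.symm ((h2 u v h).mp hl)).symm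
  have xb : ∀ u v, G.Adj u v → lab u v = GDir.R → x v = x u + 1 :=
    fun u v h hl => xa v u h.symm ((h2 v u h.symm).mpr hl)
  have xcD : ∀ u v, G.Adj u v → lab u v = GDir.D → x u = x v :=
    fun u v h hl => (xcU v u h.symm ((h3 v u h.symm).mpr hl)).symm
  -- choice functions
  have exDir : ∀ (a : GDir) (u : V), ∃ v, (∃ w, G.Adj u w ∧ lab u w = a) →
      G.Adj u v ∧ lab u v = a := by
    intro a u
    by_cases h : ∃ w, G.Adj u w ∧ lab u w = a
    · exact ⟨h.choose, fun _ => h.choose_spec⟩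
    · exact ⟨u, fun hh => absurd hh h⟩
  choose pick hpick using exDir
  obtain ⟨dn, hdn⟩ : ∃ f : V → V, ∀ u, (∃ w, G.Adj u w ∧ lab u w = GDir.D) →
      G.Adj u (f u) ∧ lab u (f u) = GDir.D := ⟨pick GDir.D, hpick GDir.D⟩
  obtain ⟨un, hun⟩ : ∃ f : V → V, ∀ u, (∃ w, G.Adj u w ∧ lab u w = GDir.U) →
      G.Adj u (f u) ∧ lab u (f u) = GDir.U := ⟨pick GDir.U, hpick GDir.U⟩
  obtain ⟨ln, hln⟩ : ∃ f : V → V, ∀ u, (∃ w, G.Adj u w ∧ lab u w = GDir.L) →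
      G.Adj u (f u) ∧ lab u (f u) = GDir.L := ⟨pick GDir.L, hpick GDir.L⟩
  obtain ⟨rt, hrt⟩ : ∃ f : V → V, ∀ u, (∃ w, G.Adj u w ∧ lab u w = GDir.R) →
      G.Adj u (f u) ∧ lab u (f u) = GDir.R := ⟨pick GDir.R, hpick GDir.R⟩
  have dn_eq : ∀ u v, G.Adj u v → lab u v = GDir.D → dn u = v := by
    intro u v h hl
    have hD : ∃ w, G.Adj u w ∧ lab u w = GDir.D := ⟨v, h, hl⟩
    exact uq u (dn u) v (hdn u hD).1 h ((hdn u hD).2.trans hl.symm)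
  have un_eq : ∀ u v, G.Adj u v → lab u v = GDir.U → un u = v := by
    intro u v h hl
    have hD : ∃ w, G.Adj u w ∧ lab u w = GDir.U := ⟨v, h, hl⟩
    exact uq u (un u) v (hun u hD).1 h ((hun u hD).2.trans hl.symm)
  have ln_eq : ∀ u v, G.Adj u v → lab u v = GDir.L → ln u = v := by
    intro u v h hl
    have hD : ∃ w, G.Adj u w ∧ lab u w = GDir.L := ⟨v, h, hl⟩
    exact uq u (ln u) v (hln u hD).1 h ((hln u hD).2.trans hl.symm)
  have rt_eq : ∀ u v, G.Adj u v → lab u v = GDir.R → rt u = v := by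
    intro u v h hl
    have hD : ∃ w, G.Adj u w ∧ lab u w = GDir.R := ⟨v, h, hl⟩
    exact uq u (rt u) v (hrt u hD).1 h ((hrt u hD).2.trans hl.symm)
  have yne : ∀ u, y u ≠ 0 → G.Adj u (dn u) ∧ lab u (dn u) = GDir.D := by
    intro u h
    refine hdn u ?_
    by_contra hc
    exact h ((y0 u).mpr hc)
  have xne : ∀ u, x u ≠ 0 → G.Adj u (ln u) ∧ lab u (ln u) = GDir.L := by
    intro u h
    refine hln u ?_
    by_contra hc
    exact h ((x0 u).mpr hc)
  -- iterates of dn and ln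
  have dnIter : ∀ k u, k ≤ y u → y (dn^[k] u) = y u - k ∧ x (dn^[k] u) = x u := by
    intro k
    induction k with
    | zero => intro u _; simp
    | succ m ih =>
      intro u hk
      have h0 : y u ≠ 0 := by omega
      obtain ⟨hadj, hlab⟩ := yne u h0
      have e1 : y u = y (dn u) + 1 := ya u (dn u) hadj hlab
      have e2 : x u = x (dn u) := xcD u (dn u) hadj hlab
      rw [Function.iterate_succ_apply]
      obtain ⟨i1, i2⟩ := ih (dn u) (by omega)
      exact ⟨by omega, by omega⟩
  have lnIter : ∀ k u, k ≤ x u → x (ln^[k] u) = x u - k ∧ y (ln^[k] u) = y u := by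
    intro k
    induction k with
    | zero => intro u _; simp
    | succ m ih =>
      intro u hk
      have h0 : x u ≠ 0 := by omega
      obtain ⟨hadj, hlab⟩ := xne u h0
      have e1 : x u = x (ln u) + 1 := xa u (ln u) hadj hlab
      have e2 : y u = y (ln u) := ycL u (ln u) hadj hlab
      rw [Function.iterate_succ_apply]
      obtain ⟨i1, i2⟩ := ih (ln u) (by omega)
      exact ⟨by omega, by omega⟩
  have recoverY : ∀ k u, k ≤ y u → un^[k] (dn^[k] u) = u := by
    intro k
    induction k with
    | zero => intro u _; simp
    | succ m ih =>
      intro u hk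
      have h0 : y u ≠ 0 := by omega
      obtain ⟨hadj, hlab⟩ := yne u h0
      have e1 : y u = y (dn u) + 1 := ya u (dn u) hadj hlab
      have hunu : un (dn u) = u := un_eq (dn u) u hadj.symm ((h3 (dn u) u hadj.symm).mpr hlab)
      rw [Function.iterate_succ_apply', Function.iterate_succ_apply]
      rw [ih (dn u) (by omega)]
      exact hunu
  have recoverX : ∀ k u, k ≤ x u → rt^[k] (ln^[k] u) = u := by
    intro k
    induction k with
    | zero => intro u _; simp
    | succ m ih =>
      intro u hk
      have h0 : x u ≠ 0 := by omega
      obtain ⟨hadj, hlab⟩ := xne u h0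
      have e1 : x u = x (ln u) + 1 := xa u (ln u) hadj hlab
      have hrtu : rt (ln u) = u := rt_eq (ln u) u hadj.symm ((h2 u (ln u) hadj).mp hlab)
      rw [Function.iterate_succ_apply', Function.iterate_succ_apply]
      rw [ih (ln u) (by omega)]
      exact hrtu
  -- squares commute down the columns
  have botcomm : ∀ k u v, k ≤ y u → G.Adj u v → lab u v = GDir.R →
      G.Adj (dn^[k] u) (dn^[k] v) ∧ lab (dn^[k] u) (dn^[k] v) = GDir.R := by
    intro k
    induction k with
    | zero => intro u v _ h hl; simpa using ⟨h, hl⟩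
    | succ m ih =>
      intro u v hk huv hl
      have h0 : y u ≠ 0 := by omega
      obtain ⟨hadj, hlab⟩ := yne u h0
      obtain ⟨d', hvd', hd'D, hdd', hdd'R⟩ := sq u v (dn u) huv hl hadj hlab
      have hdv : dn v = d' := dn_eq v d' hvd' hd'D
      have e1 : y u = y (dn u) + 1 := ya u (dn u) hadj hlab
      simp only [Function.iterate_succ_apply]
      rw [hdv]
      exact ih (dn u) d' (by omega) hdd' hdd'R
  -- the corner map is constant
  have keyD : ∀ u v, G.Adj u v → lab u v = GDir.D →
      ln^[x u] (dn^[y u] u) = ln^[x v] (dn^[y v] v) := by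
    intro u v huv hl
    have hdv : dn u = v := dn_eq u v huv hl
    have e1 : y u = y v + 1 := ya u v huv hl
    have e2 : x u = x v := xcD u v huv hl
    rw [e1, e2, Function.iterate_succ_apply, hdv]
  have keyR : ∀ u v, G.Adj u v → lab u v = GDir.R →
      ln^[x u] (dn^[y u] u) = ln^[x v] (dn^[y v] v) := by
    intro u v huv hl
    have hyv : y u = y v := ycR u v huv hl
    have hxv : x v = x u + 1 := xb u v huv hl
    obtain ⟨hb1, hb2⟩ := botcomm (y u) u v le_rfl huv hl
    have hlnv : ln (dn^[y u] v) = dn^[y u] u :=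
      ln_eq _ _ hb1.symm ((h2 (dn^[y u] v) (dn^[y u] u) hb1.symm).mpr hb2)
    rw [hxv, ← hyv, Function.iterate_succ_apply, hlnv]
  have cornerE : ∀ u v, G.Adj u v →
      ln^[x u] (dn^[y u] u) = ln^[x v] (dn^[y v] v) := by
    intro u v huv
    cases hc : lab u v with
    | D => exact keyD u v huv hc
    | U => exact (keyD v u huv.symm ((h3 u v huv).mp hc)).symm
    | R => exact keyR u v huv hc
    | L => exact (keyR v u huv.symm ((h2 u v huv).mp hc)).symm
  have cornerC : ∀ u v : V, ln^[x u] (dn^[y u] u) = ln^[x v] (dn^[y v] v) := by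
    intro u v
    have key : ∀ {a b : V}, G.Walk a b →
        ln^[x a] (dn^[y a] a) = ln^[x b] (dn^[y b] b) := by
      intro a b p
      induction p with
      | nil => rfl
      | cons h _ ih => exact (cornerE _ _ h).trans ih
    exact (hconn.preconnected u v).elim fun p => key p
  have recover : ∀ u : V, un^[y u] (rt^[x u] (ln^[x u] (dn^[y u] u))) = u := by
    intro u
    obtain ⟨hy0, hxE⟩ := dnIter (y u) u le_rfl
    have h1r : rt^[x (dn^[y u] u)] (ln^[x (dn^[y u] u)] (dn^[y u] u)) = dn^[y u] u :=
      recoverX _ _ le_rfl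
    rw [hxE] at h1r
    rw [h1r]
    exact recoverY (y u) u le_rfl
  have inj : ∀ u v, x u = x v → y u = y v → u = v := by
    intro u v hx hy
    have r1 := recover u
    rw [cornerC u v, hx, hy, recover v] at r1
    exact r1.symm
  have : Nonempty V := hconn.nonempty
  obtain ⟨um, hum⟩ := Finite.exists_max x
  obtain ⟨vm, hvm⟩ := Finite.exists_max y
  refine ⟨y vm + 1, x um + 1, x, y,
    fun u => ⟨by have := hum u; omega, by have := hvm u; omega⟩, inj, ?_, ?_, ?_⟩
  · -- surjectivity
    intro a b ha hb
    have ha' : a ≤ x um := by omega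
    have hb' : b ≤ y vm := by omega
    have exA : ∀ a', a' ≤ x um → ∃ p, x p = a' ∧ y p = 0 := by
      intro a' h
      obtain ⟨e1, e2⟩ := lnIter (x um - a') um (by omega)
      set z := ln^[x um - a'] um with hz
      obtain ⟨f1, f2⟩ := dnIter (y z) z le_rfl
      exact ⟨dn^[y z] z, by omega, by omega⟩
    have exB : ∀ b', b' ≤ y vm → ∃ q, x q = 0 ∧ y q = b' := by
      intro b' h
      obtain ⟨e1, e2⟩ := dnIter (y vm - b') vm (by omega)
      set z := dn^[y vm - b'] vm with hz
      obtain ⟨f1, f2⟩ := lnIter (x z) z le_rfl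
      exact ⟨ln^[x z] z, by omega, by omega⟩
    have hasR_dn : ∀ u, y u ≠ 0 →
        ((∃ r, G.Adj u r ∧ lab u r = GDir.R) ↔
          (∃ r, G.Adj (dn u) r ∧ lab (dn u) r = GDir.R)) := by
      intro u h0
      obtain ⟨hadj, hlab⟩ := yne u h0
      have hU : lab (dn u) u = GDir.U := (h3 (dn u) u hadj.symm).mpr hlab
      exact ((h6 (dn u) u hadj.symm hU).2).symm
    have hasR_bot : ∀ k u, k ≤ y u →
        ((∃ r, G.Adj u r ∧ lab u r = GDir.R) ↔
          (∃ r, G.Adj (dn^[k] u) r ∧ lab (dn^[k] u) r = GDir.R)) := by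
      intro k
      induction k with
      | zero => intro u _; simp
      | succ m ih =>
        intro u hk
        have h0 : y u ≠ 0 := by omega
        have e1 : y u = y (dn u) + 1 := ya u (dn u) (yne u h0).1 (yne u h0).2
        rw [Function.iterate_succ_apply]
        exact (hasR_dn u h0).trans (ih (dn u) (by omega))
    have main : ∀ a', a' ≤ x um → ∀ b', b' ≤ y vm → ∃ u, x u = a' ∧ y u = b' := by
      intro a'
      induction a' with
      | zero => intro _ b' hb2; exact exB b' hb2
      | succ m ih =>
        intro hm b' hb2
        obtain ⟨n, hnx, hny⟩ := ih (by omega) b' hb2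
        obtain ⟨p, hpx, hpy⟩ := exA (m+1) hm
        have hpx0 : x p ≠ 0 := by omega
        obtain ⟨hpadj, hplab⟩ := xne p hpx0
        have e1 : x (ln p) = m := by have := xa p (ln p) hpadj hplab; omega
        have e2 : y (ln p) = 0 := by have := ycL p (ln p) hpadj hplab; omega
        obtain ⟨f1, f2⟩ := dnIter (y n) n le_rfl
        have hbn : dn^[y n] n = ln p := inj _ _ (by omega) (by omega)
        have hR : ∃ r, G.Adj n r ∧ lab n r = GDir.R := by
          apply (hasR_bot (y n) n le_rfl).mpr
          rw [hbn]
          exact ⟨p, hpadj.symm, (h2 p (ln p) hpadj).mp hplab⟩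
        obtain ⟨r, hr1, hr2⟩ := hR
        exact ⟨r, by have := xb n r hr1 hr2; omega, by have := ycR n r hr1 hr2; omega⟩
    exact main a ha' b hb'
  · -- adjacency characterization
    intro u v
    constructor
    · intro huv
      cases hc : lab u v with
      | R => exact Or.inr ⟨ycR u v huv hc, Or.inl (by have := xb u v huv hc; omega)⟩
      | L => exact Or.inr ⟨ycL u v huv hc, Or.inr (by have := xa u v huv hc; omega)⟩
      | U => exact Or.inl ⟨xcU u v huv hc, Or.inl (by have := yb u v huv hc; omega)⟩
      | D => exact Or.inl ⟨xcD u v huv hc, Or.inr (by have := ya u v huv hc; omega)⟩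
    · rintro (⟨hx, hy | hy⟩ | ⟨hy, hx | hx⟩)
      · have h0 : y v ≠ 0 := by omega
        obtain ⟨hadj, hlab⟩ := yne v h0
        have hde : dn v = u := inj _ _
          (by have := xcD v (dn v) hadj hlab; omega)
          (by have := ya v (dn v) hadj hlab; omega)
        rw [← hde]
        exact hadj.symm
      · have h0 : y u ≠ 0 := by omega
        obtain ⟨hadj, hlab⟩ := yne u h0
        have hde : dn u = v := inj _ _
          (by have := xcD u (dn u) hadj hlab; omega)
          (by have := ya u (dn u) hadj hlab; omega)
        rw [← hde]
        exact hadj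
      · have h0 : x v ≠ 0 := by omega
        obtain ⟨hadj, hlab⟩ := xne v h0
        have hde : ln v = u := inj _ _
          (by have := xa v (ln v) hadj hlab; omega)
          (by have := ycL v (ln v) hadj hlab; omega)
        rw [← hde]
        exact hadj.symm
      · have h0 : x u ≠ 0 := by omega
        obtain ⟨hadj, hlab⟩ := xne u h0
        have hde : ln u = v := inj _ _
          (by have := xa u (ln u) hadj hlab; omega)
          (by have := ycL u (ln u) hadj hlab; omega)
        rw [← hde]
        exact hadj
  · -- label characterization
    intro u v huv
    refine ⟨⟨fun h => xb u v huv h, ?_⟩, ⟨fun h => xa u v huv h, ?_⟩,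
      ⟨fun h => yb u v huv h, ?_⟩, ⟨fun h => ya u v huv h, ?_⟩⟩
    · intro h
      cases hc : lab u v with
      | R => rfl
      | L => have := xa u v huv hc; omega
      | U => have := xcU u v huv hc; omega
      | D => have := xcD u v huv hc; omega
    · intro h
      cases hc : lab u v with
      | R => have := xb u v huv hc; omega
      | L => rfl
      | U => have := xcU u v huv hc; omega
      | D => have := xcD u v huv hc; omega
    · intro h
      cases hc : lab u v with
      | R => have := ycR u v huv hc; omega
      | L => have := ycL u v huv hc; omega
      | U => rfl
      | D => have := ya u v huv hc; omega
    · intro h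
      cases hc : lab u v with
      | R => have := ycR u v huv hc; omega
      | L => have := ycL u v huv hc; omega
      | U => have := yb u v huv hc; omega
      | D => rfl
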